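/- arXiv:1207.5121 — 4 statements merged into one kernel-verified Lean document; each statement's English description precedes it below -/
import Mathlib

section
/- Let k be a commutative ring. Let f : k[X,Y]/(X²,Y²,XY) → k[X,Y]/(X²,Y²) be the k-algebra homomorphism induced by X ↦ X, Y ↦ XY; let g : k[X,Y]/(X²,Y²) → k[X]/(X²) be the k-algebra homomorphism induced by X ↦ 0, Y ↦ 0; and let h : k[X,Y]/(X²,Y²) → k[X]/(X²) be the k-algebra homomorphism induced by X ↦ 0, Y ↦ X. Then g ∘ f = h ∘ f, f is injective, and the range of f is exactly the set of b ∈ k[X,Y]/(X²,Y²) with g(b) = h(b). -/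
open MvPolynomial

noncomputable section

/-- The ideal `(X², Y², XY)` in `k[X,Y]`. -/
def idealXXYYXY (k : Type*) [CommRing k] : Ideal (MvPolynomial (Fin 2) k) :=
  Ideal.span {(X 0 : MvPolynomial (Fin 2) k) ^ 2, (X 1) ^ 2, (X 0) * (X 1)}

/-- The ideal `(X², Y²)` in `k[X,Y]`. -/
def idealXXYY (k : Type*) [CommRing k] : Ideal (MvPolynomial (Fin 2) k) :=
  Ideal.span {(X 0 : MvPolynomial (Fin 2) k) ^ 2, (X 1) ^ 2}

/-- The ideal `(X²)` in `k[X]`. -/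
def idealXX (k : Type*) [CommRing k] : Ideal (Polynomial k) :=
  Ideal.span {(Polynomial.X : Polynomial k) ^ 2}

section Aux

variable {k : Type*} [CommRing k]

/-- Normal form in `k[X,Y]/(X²,Y²)`. -/
lemma normI (p : MvPolynomial (Fin 2) k) : ∃ a b c d : k,
    Ideal.Quotient.mk (idealXXYY k) p =
      Ideal.Quotient.mk (idealXXYY k) (C a + C b * X 0 + C c * X 1 + C d * (X 0 * X 1)) := by
  induction p using MvPolynomial.induction_on with
  | C a => exact ⟨a, 0, 0, 0, by simp⟩
  | add p q hp hq =>
      obtain ⟨a, b, c, d, hp⟩ := hp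
      obtain ⟨a', b', c', d', hq⟩ := hq
      refine ⟨a + a', b + b', c + c', d + d', ?_⟩
      rw [map_add, hp, hq, ← map_add]
      congr 1
      push_cast [map_add]
      ring
  | mul_X p i hp =>
      obtain ⟨a, b, c, d, hp⟩ := hp
      have h1 : Ideal.Quotient.mk (idealXXYY k) (p * X i) =
          Ideal.Quotient.mk (idealXXYY k)
            ((C a + C b * X 0 + C c * X 1 + C d * (X 0 * X 1)) * X i) := by
        rw [map_mul, hp, map_mul]
      have hi : i = 0 ∨ i = 1 := by omega
      rcases hi with rfl | rfl
      · refine ⟨0, a, 0, c, ?_⟩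
        rw [h1, Ideal.Quotient.eq]
        have : (C a + C b * X 0 + C c * X 1 + C d * (X 0 * X 1)) * X 0 -
            (C 0 + C a * X 0 + C 0 * X 1 + C c * (X 0 * X 1)) =
            (C b + C d * X 1) * (X 0 : MvPolynomial (Fin 2) k) ^ 2 := by
          simp only [C_0]; ring
        rw [this]
        exact Ideal.mul_mem_left _ _ (Ideal.subset_span (by simp))
      · refine ⟨0, 0, a, b, ?_⟩
        rw [h1, Ideal.Quotient.eq]
        have : (C a + C b * X 0 + C c * X 1 + C d * (X 0 * X 1)) * X 1 -
            (C 0 + C 0 * X 0 + C a * X 1 + C b * (X 0 * X 1)) =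
            (C c + C d * X 0) * (X 1 : MvPolynomial (Fin 2) k) ^ 2 := by
          simp only [C_0]; ring
        rw [this]
        exact Ideal.mul_mem_left _ _ (Ideal.subset_span (by simp))

/-- Normal form in `k[X,Y]/(X²,Y²,XY)`. -/
lemma normJ (p : MvPolynomial (Fin 2) k) : ∃ a b c : k,
    Ideal.Quotient.mk (idealXXYYXY k) p =
      Ideal.Quotient.mk (idealXXYYXY k) (C a + C b * X 0 + C c * X 1) := by
  induction p using MvPolynomial.induction_on with
  | C a => exact ⟨a, 0, 0, by simp⟩
  | add p q hp hq =>
      obtain ⟨a, b, c, hp⟩ := hp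
      obtain ⟨a', b', c', hq⟩ := hq
      refine ⟨a + a', b + b', c + c', ?_⟩
      rw [map_add, hp, hq, ← map_add]
      congr 1
      push_cast [map_add]
      ring
  | mul_X p i hp =>
      obtain ⟨a, b, c, hp⟩ := hp
      have h1 : Ideal.Quotient.mk (idealXXYYXY k) (p * X i) =
          Ideal.Quotient.mk (idealXXYYXY k) ((C a + C b * X 0 + C c * X 1) * X i) := by
        rw [map_mul, hp, map_mul]
      have hi : i = 0 ∨ i = 1 := by omega
      rcases hi with rfl | rfl
      · refine ⟨0, a, 0, ?_⟩
        rw [h1, Ideal.Quotient.eq]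
        have : (C a + C b * X 0 + C c * X 1) * X 0 - (C 0 + C a * X 0 + C 0 * X 1) =
            C b * (X 0 : MvPolynomial (Fin 2) k) ^ 2 + C c * (X 0 * X 1) := by
          simp only [C_0]; ring
        rw [this]
        exact Ideal.add_mem _ (Ideal.mul_mem_left _ _ (Ideal.subset_span (by simp)))
          (Ideal.mul_mem_left _ _ (Ideal.subset_span (by simp)))
      · refine ⟨0, 0, a, ?_⟩
        rw [h1, Ideal.Quotient.eq]
        have : (C a + C b * X 0 + C c * X 1) * X 1 - (C 0 + C 0 * X 0 + C a * X 1) =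
            C c * (X 1 : MvPolynomial (Fin 2) k) ^ 2 + C b * (X 0 * X 1) := by
          simp only [C_0]; ring
        rw [this]
        exact Ideal.add_mem _ (Ideal.mul_mem_left _ _ (Ideal.subset_span (by simp)))
          (Ideal.mul_mem_left _ _ (Ideal.subset_span (by simp)))

lemma zeroP (c : k) (h : Polynomial.C c * Polynomial.X ∈ idealXX k) : c = 0 := by
  rw [idealXX, Ideal.mem_span_singleton] at h
  obtain ⟨u, hu⟩ := h
  have h2 : (Polynomial.C c * Polynomial.X).coeff 1 = (u * Polynomial.X ^ 2).coeff 1 := by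
    rw [← mul_comm (Polynomial.X ^ 2) u, ← hu]
  simpa [Polynomial.coeff_mul_X_pow'] using h2

lemma coeffI (q : MvPolynomial (Fin 2) k) (hq : q ∈ idealXXYY k) (m : Fin 2 →₀ ℕ)
    (h0 : m 0 ≤ 1) (h1 : m 1 ≤ 1) : coeff m q = 0 := by
  rw [idealXXYY, Ideal.mem_span_pair] at hq
  obtain ⟨u, v, huv⟩ := hq
  have e0 : (X 0 : MvPolynomial (Fin 2) k) ^ 2 = monomial (Finsupp.single 0 2) 1 :=
    X_pow_eq_monomial
  have e1 : (X 1 : MvPolynomial (Fin 2) k) ^ 2 = monomial (Finsupp.single 1 2) 1 :=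
    X_pow_eq_monomial
  rw [← huv, e0, e1]
  rw [coeff_add, coeff_mul_monomial', coeff_mul_monomial']
  rw [if_neg, if_neg, add_zero]
  · rw [Finsupp.single_le_iff]; omega
  · rw [Finsupp.single_le_iff]; omega

lemma zeroI (a b c : k)
    (h : C a + C b * X 0 + C c * (X 0 * X 1) ∈ idealXXYY k) :
    a = 0 ∧ b = 0 ∧ c = 0 := by
  have h00 := coeffI _ h 0 (by simp) (by simp)
  have h10 := coeffI _ h (Finsupp.single 0 1) (by simp) (by simp [Finsupp.single_apply])
  have h11 := coeffI _ h (Finsupp.single 0 1 + Finsupp.single 1 1)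
    (by simp [Finsupp.single_apply]) (by simp [Finsupp.single_apply])
  have eXY : (X 0 * X 1 : MvPolynomial (Fin 2) k) =
      monomial (Finsupp.single 0 1 + Finsupp.single 1 1) 1 := by
    rw [X, X, monomial_mul, one_mul]
  rw [eXY] at h00 h10 h11
  simp only [coeff_add, coeff_C, coeff_C_mul, coeff_X', coeff_monomial] at h00 h10 h11
  simp [Finsupp.ext_iff, Finsupp.add_apply, Finsupp.single_apply, Fin.forall_fin_two]
    at h00 h10 h11
  exact ⟨h00, h10, h11⟩

end Aux

/-- With `f : k[X,Y]/(X²,Y²,XY) → k[X,Y]/(X²,Y²)` induced by `X ↦ X, Y ↦ XY`,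
`g : k[X,Y]/(X²,Y²) → k[X]/(X²)` induced by `X ↦ 0, Y ↦ 0`, and
`h : k[X,Y]/(X²,Y²) → k[X]/(X²)` induced by `X ↦ 0, Y ↦ X`, one has
`g ∘ f = h ∘ f`, `f` is injective, and the range of `f` is exactly the
equalizer of `g` and `h`. -/
theorem stmt_0 (k : Type*) [CommRing k]
    (f : (MvPolynomial (Fin 2) k ⧸ idealXXYYXY k) →ₐ[k] (MvPolynomial (Fin 2) k ⧸ idealXXYY k))
    (g h : (MvPolynomial (Fin 2) k ⧸ idealXXYY k) →ₐ[k] (Polynomial k ⧸ idealXX k))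
    (hf0 : f (Ideal.Quotient.mk (idealXXYYXY k) (X 0)) = Ideal.Quotient.mk (idealXXYY k) (X 0))
    (hf1 : f (Ideal.Quotient.mk (idealXXYYXY k) (X 1)) =
      Ideal.Quotient.mk (idealXXYY k) ((X 0) * (X 1)))
    (hg0 : g (Ideal.Quotient.mk (idealXXYY k) (X 0)) = 0)
    (hg1 : g (Ideal.Quotient.mk (idealXXYY k) (X 1)) = 0)
    (hh0 : h (Ideal.Quotient.mk (idealXXYY k) (X 0)) = 0)
    (hh1 : h (Ideal.Quotient.mk (idealXXYY k) (X 1)) =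
      Ideal.Quotient.mk (idealXX k) Polynomial.X) :
    g.comp f = h.comp f ∧ Function.Injective f ∧
      Set.range ⇑f = {b | g b = h b} := by
  have fC : ∀ a : k, f (Ideal.Quotient.mk (idealXXYYXY k) (C a)) =
      Ideal.Quotient.mk (idealXXYY k) (C a) := fun a => by
    rw [← MvPolynomial.algebraMap_eq, Ideal.Quotient.mk_algebraMap, f.commutes,
      ← Ideal.Quotient.mk_algebraMap]
  have gC : ∀ a : k, g (Ideal.Quotient.mk (idealXXYY k) (C a)) =
      Ideal.Quotient.mk (idealXX k) (Polynomial.C a) := fun a => by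
    rw [← MvPolynomial.algebraMap_eq, Ideal.Quotient.mk_algebraMap, g.commutes,
      ← Ideal.Quotient.mk_algebraMap, Polynomial.algebraMap_eq]
  have hC : ∀ a : k, h (Ideal.Quotient.mk (idealXXYY k) (C a)) =
      Ideal.Quotient.mk (idealXX k) (Polynomial.C a) := fun a => by
    rw [← MvPolynomial.algebraMap_eq, Ideal.Quotient.mk_algebraMap, h.commutes,
      ← Ideal.Quotient.mk_algebraMap, Polynomial.algebraMap_eq]
  have fval : ∀ a b c : k, f (Ideal.Quotient.mk (idealXXYYXY k) (C a + C b * X 0 + C c * X 1)) =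
      Ideal.Quotient.mk (idealXXYY k) (C a + C b * X 0 + C c * (X 0 * X 1)) := by
    intro a b c
    simp only [map_add, map_mul, fC, hf0, hf1]
  have gval : ∀ a b c d : k,
      g (Ideal.Quotient.mk (idealXXYY k) (C a + C b * X 0 + C c * X 1 + C d * (X 0 * X 1))) =
      Ideal.Quotient.mk (idealXX k) (Polynomial.C a) := by
    intro a b c d
    simp only [map_add, map_mul, gC, hg0, hg1]
    ring
  have hval : ∀ a b c d : k,
      h (Ideal.Quotient.mk (idealXXYY k) (C a + C b * X 0 + C c * X 1 + C d * (X 0 * X 1))) =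
      Ideal.Quotient.mk (idealXX k) (Polynomial.C a) +
        Ideal.Quotient.mk (idealXX k) (Polynomial.C c) *
          Ideal.Quotient.mk (idealXX k) Polynomial.X := by
    intro a b c d
    simp only [map_add, map_mul, hC, hh0, hh1]
    ring
  have part1 : ∀ z, g (f z) = h (f z) := by
    intro z
    obtain ⟨p, rfl⟩ := Ideal.Quotient.mk_surjective (I := idealXXYYXY k) z
    obtain ⟨a, b, c, hp⟩ := normJ p
    rw [hp, fval, show (C a + C b * X 0 + C c * (X 0 * X 1) : MvPolynomial (Fin 2) k) =
      C a + C b * X 0 + C 0 * X 1 + C c * (X 0 * X 1) by simp only [C_0]; ring,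
      gval, hval]
    simp
  refine ⟨AlgHom.ext part1, ?_, ?_⟩
  · rw [injective_iff_map_eq_zero]
    intro z hz
    obtain ⟨p, rfl⟩ := Ideal.Quotient.mk_surjective (I := idealXXYYXY k) z
    obtain ⟨a, b, c, hp⟩ := normJ p
    rw [hp] at hz ⊢
    rw [fval, Ideal.Quotient.eq_zero_iff_mem] at hz
    obtain ⟨ha, hb, hc⟩ := zeroI a b c hz
    rw [ha, hb, hc]
    simp
  · ext b
    constructor
    · rintro ⟨z, rfl⟩
      exact part1 z
    · intro hb
      obtain ⟨q, rfl⟩ := Ideal.Quotient.mk_surjective (I := idealXXYY k) b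
      obtain ⟨a, b', c, d, hq⟩ := normI q
      simp only [Set.mem_setOf_eq] at hb
      rw [hq, gval, hval] at hb
      have hc0 : Ideal.Quotient.mk (idealXX k) (Polynomial.C c * Polynomial.X) = 0 := by
        rw [map_mul]
        linear_combination -hb
      rw [Ideal.Quotient.eq_zero_iff_mem] at hc0
      have hc : c = 0 := zeroP c hc0
      refine ⟨Ideal.Quotient.mk (idealXXYYXY k) (C a + C b' * X 0 + C d * X 1), ?_⟩
      rw [fval, hq, hc]
      congr 1
      simp only [C_0]
      ring
end
end

section
/- Let k be a commutative ring. Let f : k[X,Y]/(X²,Y²,XY) → k[X,Y]/(X²,Y²) be the k-algebra homomorphism induced by X ↦ X, Y ↦ XY; let g, h : k[X,Y]/(X²,Y²) → k[X]/(X²) be the k-algebra homomorphisms induced by X ↦ 0, Y ↦ 0 and by X ↦ 0, Y ↦ X respectively. Then for every commutative k-algebra T and every k-algebra homomorphism u : T → k[X,Y]/(X²,Y²) with g ∘ u = h ∘ u, there exists a unique k-algebra homomorphism v : T → k[X,Y]/(X²,Y²,XY) such that f ∘ v = u. -/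
/-!
Every element of `k[X,Y]/(X²,Y²)` can be written uniquely as `a + bX + cY + dXY`; uniqueness is
read off after sending `X, Y` to the two nilpotents of the dual numbers over the dual numbers.
Every element of `k[X,Y]/(X²,Y²,XY)` is of the form `a + bX + cY`, and `f` sends it to
`a + bX + cXY`. Hence `f` is injective with image the elements with `c = 0`. Since `g` and `h`
take the values `a` and `a + cX` on `a + bX + cY + dXY`, this image is exactly the equalizer
of `g` and `h`, so `u` lands in it and factors uniquely through `f`.
-/

open MvPolynomial

noncomputable section

theorem AlgHom.existsUnique_comp_eq_of_injective {R A B T : Type*} [CommSemiring R]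
    [Semiring A] [Semiring B] [Semiring T] [Algebra R A] [Algebra R B] [Algebra R T]
    {f : A →ₐ[R] B} (hf : Function.Injective f) {u : T →ₐ[R] B} (hu : ∀ t, u t ∈ f.range) :
    ∃! v : T →ₐ[R] A, f.comp v = u := by
  let e := AlgEquiv.ofInjective f hf
  have hv₀ : f.comp ((e.symm : f.range →ₐ[R] A).comp (u.codRestrict f.range hu)) = u := by
    ext t
    exact congrArg Subtype.val (e.apply_symm_apply ⟨u t, hu t⟩)
  exact ⟨_, hv₀, fun v hv => AlgHom.ext fun t => hf (DFunLike.congr_fun (hv.trans hv₀.symm) t)⟩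

section

open DualNumber TrivSqZeroExt Ideal.Quotient

variable {k : Type*} [CommRing k]

namespace idealXXYY

def ofCoeffs (a b c d : k) : MvPolynomial (Fin 2) k ⧸ idealXXYY k :=
  algebraMap k _ a + algebraMap k _ b * mk _ (X 0) + algebraMap k _ c * mk _ (X 1) +
    algebraMap k _ d * (mk _ (X 0) * mk _ (X 1))

theorem map_ofCoeffs {R : Type*} [Semiring R] [Algebra k R]
    (φ : (MvPolynomial (Fin 2) k ⧸ idealXXYY k) →ₐ[k] R) (a b c d : k) :
    φ (ofCoeffs a b c d) = algebraMap k R a + algebraMap k R b * φ (mk _ (X 0)) +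
      algebraMap k R c * φ (mk _ (X 1)) + algebraMap k R d * (φ (mk _ (X 0)) * φ (mk _ (X 1))) := by
  simp [ofCoeffs]

theorem mk_X_sq (i : Fin 2) : mk (idealXXYY k) (X i) ^ 2 = 0 := by
  rw [← map_pow, eq_zero_iff_mem]
  fin_cases i <;> exact Ideal.subset_span (by simp)

theorem exists_ofCoeffs_eq (z : MvPolynomial (Fin 2) k ⧸ idealXXYY k) :
    ∃ a b c d : k, ofCoeffs a b c d = z := by
  obtain ⟨p, rfl⟩ := mk_surjective z
  induction p using MvPolynomial.induction_on with
  | C r => exact ⟨r, 0, 0, 0, by simp [ofCoeffs, ← mk_algebraMap]⟩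
  | add p q hp hq =>
    obtain ⟨a, b, c, d, hp⟩ := hp
    obtain ⟨a', b', c', d', hq⟩ := hq
    refine ⟨a + a', b + b', c + c', d + d', ?_⟩
    rw [map_add, ← hp, ← hq]
    simp only [ofCoeffs, map_add]
    ring
  | mul_X p i hp =>
    obtain ⟨a, b, c, d, hp⟩ := hp
    rw [map_mul, ← hp]
    match i with
    | 0 =>
      refine ⟨0, a, 0, c, ?_⟩
      simp only [ofCoeffs, map_zero]
      linear_combination -(algebraMap k _ b + algebraMap k _ d * mk _ (X 1)) * mk_X_sq (k := k) 0
    | 1 =>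
      refine ⟨0, 0, a, b, ?_⟩
      simp only [ofCoeffs, map_zero]
      linear_combination -(algebraMap k _ c + algebraMap k _ d * mk _ (X 0)) * mk_X_sq (k := k) 1

def toDualNumberDualNumber :
    (MvPolynomial (Fin 2) k ⧸ idealXXYY k) →ₐ[k] DualNumber (DualNumber k) :=
  liftₐ _ (aeval ![inl ε, (ε : DualNumber (DualNumber k))]) fun p hp => by
    refine Ideal.span_le (I := RingHom.ker _) |>.mpr ?_ hp
    rintro q (rfl | rfl) <;> simp [sq, eps_mul_eps, ← inl_mul]

@[simp] theorem toDualNumberDualNumber_mk (p : MvPolynomial (Fin 2) k) :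
    toDualNumberDualNumber (mk (idealXXYY k) p) =
      aeval ![inl ε, (ε : DualNumber (DualNumber k))] p :=
  rfl

theorem toDualNumberDualNumber_ofCoeffs (a b c d : k) :
    toDualNumberDualNumber (ofCoeffs a b c d) = inl (inl a + inr b) + inr (inl c + inr d) := by
  ext <;> simp [map_ofCoeffs, algebraMap_eq_inl']

theorem ofCoeffs_eq_zero {a b c d : k} (h : ofCoeffs a b c d = 0) :
    a = 0 ∧ b = 0 ∧ c = 0 ∧ d = 0 := by
  have h' := congrArg toDualNumberDualNumber h
  rw [toDualNumberDualNumber_ofCoeffs, map_zero] at h'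
  simpa [TrivSqZeroExt.ext_iff, and_assoc] using h'

theorem le_idealXXYYXY : idealXXYY k ≤ idealXXYYXY k :=
  Ideal.span_mono <| by simp [Set.insert_subset_iff]

end idealXXYY

namespace idealXXYYXY

def ofCoeffs (a b c : k) : MvPolynomial (Fin 2) k ⧸ idealXXYYXY k :=
  algebraMap k _ a + algebraMap k _ b * mk _ (X 0) + algebraMap k _ c * mk _ (X 1)

theorem map_ofCoeffs {R : Type*} [Semiring R] [Algebra k R]
    (φ : (MvPolynomial (Fin 2) k ⧸ idealXXYYXY k) →ₐ[k] R) (a b c : k) :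
    φ (ofCoeffs a b c) = algebraMap k R a + algebraMap k R b * φ (mk _ (X 0)) +
      algebraMap k R c * φ (mk _ (X 1)) := by
  simp [ofCoeffs]

theorem mk_X_mul_X : mk (idealXXYYXY k) (X 0) * mk _ (X 1) = 0 := by
  rw [← map_mul, eq_zero_iff_mem]
  exact Ideal.subset_span (by simp)

theorem exists_ofCoeffs_eq (w : MvPolynomial (Fin 2) k ⧸ idealXXYYXY k) :
    ∃ a b c : k, ofCoeffs a b c = w := by
  obtain ⟨z, rfl⟩ := factor_surjective idealXXYY.le_idealXXYYXY w
  obtain ⟨a, b, c, d, rfl⟩ := idealXXYY.exists_ofCoeffs_eq z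
  refine ⟨a, b, c, ?_⟩
  rw [← factorₐ_apply k, idealXXYY.map_ofCoeffs]
  simp [ofCoeffs, factorₐ_apply, factor_mk, mk_X_mul_X]

end idealXXYYXY

namespace idealXX

def toDualNumber : (Polynomial k ⧸ idealXX k) →ₐ[k] DualNumber k :=
  liftₐ _ (Polynomial.aeval ε) fun p hp => by
    refine Ideal.span_le (I := RingHom.ker _) |>.mpr ?_ hp
    rintro q rfl
    simp [eps_pow_two]

@[simp] theorem toDualNumber_mk (p : Polynomial k) :
    toDualNumber (mk (idealXX k) p) = Polynomial.aeval ε p :=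
  rfl

theorem eq_zero_of_algebraMap_mul_mk_X_eq_zero {c : k}
    (h : algebraMap k _ c * mk (idealXX k) Polynomial.X = 0) : c = 0 := by
  simpa [algebraMap_eq_inl'] using congrArg (fun z => snd (toDualNumber z)) h

end idealXX

end

/-- Universal (equalizer) property: with `f : k[X,Y]/(X²,Y²,XY) → k[X,Y]/(X²,Y²)` induced by
`X ↦ X, Y ↦ XY`, and `g, h : k[X,Y]/(X²,Y²) → k[X]/(X²)` induced by `X ↦ 0, Y ↦ 0` and
`X ↦ 0, Y ↦ X` respectively, every `k`-algebra homomorphism `u : T → k[X,Y]/(X²,Y²)` with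
`g ∘ u = h ∘ u` factors uniquely through `f`. -/
theorem stmt_1 (k : Type*) [CommRing k]
    (f : (MvPolynomial (Fin 2) k ⧸ idealXXYYXY k) →ₐ[k] (MvPolynomial (Fin 2) k ⧸ idealXXYY k))
    (g h : (MvPolynomial (Fin 2) k ⧸ idealXXYY k) →ₐ[k] (Polynomial k ⧸ idealXX k))
    (hf0 : f (Ideal.Quotient.mk (idealXXYYXY k) (X 0)) = Ideal.Quotient.mk (idealXXYY k) (X 0))
    (hf1 : f (Ideal.Quotient.mk (idealXXYYXY k) (X 1)) =
      Ideal.Quotient.mk (idealXXYY k) ((X 0) * (X 1)))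
    (hg0 : g (Ideal.Quotient.mk (idealXXYY k) (X 0)) = 0)
    (hg1 : g (Ideal.Quotient.mk (idealXXYY k) (X 1)) = 0)
    (hh0 : h (Ideal.Quotient.mk (idealXXYY k) (X 0)) = 0)
    (hh1 : h (Ideal.Quotient.mk (idealXXYY k) (X 1)) =
      Ideal.Quotient.mk (idealXX k) Polynomial.X)
    (T : Type*) [CommRing T] [Algebra k T]
    (u : T →ₐ[k] (MvPolynomial (Fin 2) k ⧸ idealXXYY k))
    (hu : g.comp u = h.comp u) :
    ∃! v : T →ₐ[k] (MvPolynomial (Fin 2) k ⧸ idealXXYYXY k), f.comp v = u := by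
  have hf (a b c : k) : f (idealXXYYXY.ofCoeffs a b c) = idealXXYY.ofCoeffs a b 0 c := by
    rw [idealXXYYXY.map_ofCoeffs, hf0, hf1, idealXXYY.ofCoeffs, map_mul]
    simp
  have hinj : Function.Injective f := by
    refine (injective_iff_map_eq_zero f).2 fun w hw => ?_
    obtain ⟨a, b, c, rfl⟩ := idealXXYYXY.exists_ofCoeffs_eq w
    obtain ⟨rfl, rfl, -, rfl⟩ := idealXXYY.ofCoeffs_eq_zero (by rwa [hf] at hw)
    simp [idealXXYYXY.ofCoeffs]
  have hrange (z) (hz : g z = h z) : z ∈ f.range := by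
    obtain ⟨a, b, c, d, rfl⟩ := idealXXYY.exists_ofCoeffs_eq z
    simp only [idealXXYY.map_ofCoeffs, hg0, hg1, hh0, hh1] at hz
    obtain rfl := idealXX.eq_zero_of_algebraMap_mul_mk_X_eq_zero (by simpa using hz.symm)
    exact ⟨idealXXYYXY.ofCoeffs a b d, hf a b d⟩
  exact AlgHom.existsUnique_comp_eq_of_injective hinj fun t => hrange _ (DFunLike.congr_fun hu t)
end
end

section
/- For every n ≥ 1, every permutation σ of {1,…,n+1} and every i ∈ {1,…,n+1}, the signature of the deleted permutation δᵢ^σ satisfies ε_{δᵢ^σ} = (−1)^{σ⁻¹(i) − i} · ε_σ, where ε denotes the sign of a permutation. -/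
/-! The deleted permutation is characterized by `σ ∘ k.succAbove = i.succAbove ∘ δ` with
`k = σ⁻¹ i`. Conjugating, `Fin.cycleRange i * σ * (Fin.cycleRange k)⁻¹` fixes `0` and acts as `δ`
on the remaining points, so it has the sign of `δ`; the two cycles `(0 1 … i)` and `(0 1 … k)`
contribute the factors `(-1)^i` and `(-1)^k`. -/

open Equiv

lemma Fin.succAbove_eq_ite_val {n : ℕ} (k : Fin (n + 1)) (j : Fin n) :
    k.succAbove j = if (j : ℕ) < k then j.castSucc else j.succ := by
  simp [Fin.succAbove, Fin.lt_def]

lemma Fin.succAbove_eq_of_val_eq_ite {n : ℕ} {i v : Fin (n + 1)} {w : Fin n} (hv : v ≠ i)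
    (hw : (w : ℕ) = if (v : ℕ) < i then (v : ℕ) else (v : ℕ) - 1) : i.succAbove w = v := by
  rw [Fin.succAbove_eq_ite_val, Fin.ext_iff]
  have hv' : (v : ℕ) ≠ i := Fin.val_ne_of_ne hv
  split_ifs at hw ⊢ <;> simp only [Fin.val_castSucc, Fin.val_succ] <;> omega

lemma Equiv.Perm.sign_eq_of_apply_succAbove {n : ℕ} {σ : Perm (Fin (n + 1))} {δ : Perm (Fin n)}
    {i k : Fin (n + 1)} (hk : σ k = i) (hδ : ∀ j, σ (k.succAbove j) = i.succAbove (δ j)) :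
    sign δ = (-1) ^ ((k : ℤ) - (i : ℤ)) * sign σ := by
  have hτ : i.cycleRange * σ * k.cycleRange⁻¹ = decomposeFin.symm (0, δ) := by
    ext x
    cases x using Fin.cases with
    | zero => simp [hk]
    | succ j => simp [hδ]
  have hsign := congrArg sign hτ
  simp only [sign_mul, sign_inv, Fin.sign_cycleRange, decomposeFin.symm_sign, if_pos, one_mul]
    at hsign
  rw [← hsign, zpow_sub, zpow_natCast, zpow_natCast, Int.units_inv_eq_self]
  ac_rfl

theorem stmt_3_general (n : ℕ) (σ : Equiv.Perm (Fin (n + 1))) (i : Fin (n + 1))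
    (δ : Equiv.Perm (Fin n))
    (hδ : ∀ j : Fin n,
      (δ j : ℕ) =
        (let j' : Fin (n + 1) := if (j : ℕ) < ((σ⁻¹ i : Fin (n + 1)) : ℕ)
          then j.castSucc else j.succ
        if (σ j' : ℕ) < (i : ℕ) then (σ j' : ℕ) else (σ j' : ℕ) - 1)) :
    Equiv.Perm.sign δ =
      (-1 : ℤˣ) ^ ((((σ⁻¹ i : Fin (n + 1)) : ℕ) : ℤ) - (((i : Fin (n + 1)) : ℕ) : ℤ)) *
        Equiv.Perm.sign σ := by
  refine Perm.sign_eq_of_apply_succAbove (σ.apply_symm_apply i) fun j => ?_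
  have hne : σ ((σ⁻¹ i).succAbove j) ≠ i := by
    rw [Ne, ← Perm.eq_inv_iff_eq]
    exact Fin.succAbove_ne _ j
  have hδj := hδ j
  dsimp only at hδj
  rw [← Fin.succAbove_eq_ite_val] at hδj
  exact (Fin.succAbove_eq_of_val_eq_ite hne hδj).symm

/-- For `n ≥ 1`, a permutation `σ` of `{0,…,n}` (written 0-based instead of the paper's
1-based `{1,…,n+1}`), `i ∈ {0,…,n}`, and the deleted permutation `δ = δᵢ^σ` of `Fin n`
(characterized by its values: `δ j = σ j'` if `σ j' < i` and `σ j' − 1` if `σ j' > i`,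
where `j' = j` if `j < σ⁻¹(i)` and `j' = j + 1` otherwise), the signature satisfies
`ε_δ = (−1)^(σ⁻¹(i) − i) · ε_σ`. -/
theorem stmt_3 (n : ℕ) (hn : 1 ≤ n) (σ : Equiv.Perm (Fin (n + 1))) (i : Fin (n + 1))
    (δ : Equiv.Perm (Fin n))
    (hδ : ∀ j : Fin n,
      (δ j : ℕ) =
        (let j' : Fin (n + 1) := if (j : ℕ) < ((σ⁻¹ i : Fin (n + 1)) : ℕ)
          then j.castSucc else j.succ
        if (σ j' : ℕ) < (i : ℕ) then (σ j' : ℕ) else (σ j' : ℕ) - 1)) :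
    Equiv.Perm.sign δ =
      (-1 : ℤˣ) ^ ((((σ⁻¹ i : Fin (n + 1)) : ℕ) : ℤ) - (((i : Fin (n + 1)) : ℕ) : ℤ)) *
        Equiv.Perm.sign σ :=
  stmt_3_general n σ i δ hδ
end

section
/- Let α be a type (a set), n ≥ 1, σ a permutation of {1,…,n+1} and i ∈ {1,…,n+1}. For τ a permutation of {1,…,m} let Σ_τ : α^m → α^m denote the map (d₁,…,d_m) ↦ (d_{τ(1)},…,d_{τ(m)}), and for i ∈ {1,…,n+1} let P_i : α^{n+1} → α^{n+1} denote the map (d₁,…,d_{n+1}) ↦ (d₁,…,d_{i−1},d_{i+1},…,d_{n+1},d_i). Then P_{σ⁻¹(i)} ∘ Σ_σ = (Σ_{δᵢ^σ} × id) ∘ P_i, where Σ_{δᵢ^σ} × id acts on α^{n+1} = α^n × α by applying Σ_{δᵢ^σ} to the first n coordinates and leaving the last coordinate unchanged. -/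
/-- `moveToLast i d` is the tuple `(d₀,…,d_{i−1},d_{i+1},…,d_n,d_i)` obtained from
`d = (d₀,…,d_n)` by moving the `i`-th coordinate to the last position (0-based indexing,
corresponding to the paper's 1-based `P_i`). -/
def moveToLast {α : Type*} {n : ℕ} (i : Fin (n + 1)) (d : Fin (n + 1) → α) :
    Fin (n + 1) → α :=
  fun m => if h : (m : ℕ) < n then d (i.succAbove ⟨m, h⟩) else d i

/-- `permAction τ d` is the tuple `(d_{τ(0)},…,d_{τ(m−1)})` (the paper's `Σ_τ`). -/
def permAction {α : Type*} {m : ℕ} (τ : Equiv.Perm (Fin m)) (d : Fin m → α) : Fin m → α :=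
  fun x => d (τ x)

/-- `permActionFst δ d` applies `Σ_δ` to the first `n` coordinates of `d ∈ α^{n+1}` and
leaves the last coordinate unchanged (the paper's `Σ_{δᵢ^σ} × id` on `α^{n+1} = α^n × α`). -/
def permActionFst {α : Type*} {n : ℕ} (δ : Equiv.Perm (Fin n)) (d : Fin (n + 1) → α) :
    Fin (n + 1) → α :=
  fun m => if h : (m : ℕ) < n then d ((δ ⟨m, h⟩).castSucc) else d m

lemma val_succAbove' {n : ℕ} (p : Fin (n + 1)) (k : Fin n) :
    (p.succAbove k : ℕ) = if (k : ℕ) < (p : ℕ) then (k : ℕ) else (k : ℕ) + 1 := by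
  unfold Fin.succAbove
  by_cases h : (k : ℕ) < (p : ℕ)
  · rw [if_pos (by simpa [Fin.lt_def] using h), if_pos h]; simp
  · rw [if_neg (by simpa [Fin.lt_def] using h), if_neg h]; simp

/-- For `n ≥ 1`, a permutation `σ` of `{0,…,n}` (0-based instead of the paper's 1-based
`{1,…,n+1}`), `i ∈ {0,…,n}`, and the deleted permutation `δ = δᵢ^σ` of `Fin n`
(characterized by its values: `δ j = σ j'` if `σ j' < i` and `σ j' − 1` if `σ j' > i`,
where `j' = j` if `j < σ⁻¹(i)` and `j' = j + 1` otherwise), one has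
`P_{σ⁻¹(i)} ∘ Σ_σ = (Σ_δ × id) ∘ P_i`. -/
theorem stmt_10 (α : Type*) (n : ℕ) (hn : 1 ≤ n) (σ : Equiv.Perm (Fin (n + 1)))
    (i : Fin (n + 1)) (δ : Equiv.Perm (Fin n))
    (hδ : ∀ j : Fin n,
      (δ j : ℕ) =
        (let j' : Fin (n + 1) := if (j : ℕ) < ((σ⁻¹ i : Fin (n + 1)) : ℕ)
          then j.castSucc else j.succ
        if (σ j' : ℕ) < (i : ℕ) then (σ j' : ℕ) else (σ j' : ℕ) - 1)) :
    (moveToLast (σ⁻¹ i)) ∘ (permAction (α := α) σ) =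
      (permActionFst δ) ∘ (moveToLast i) := by
  funext d m
  simp only [Function.comp_apply, moveToLast, permAction, permActionFst]
  by_cases h : (m : ℕ) < n
  · rw [dif_pos h, dif_pos h, dif_pos (show (((δ ⟨m, h⟩).castSucc : Fin (n+1)) : ℕ) < n by
      simpa using (δ ⟨m, h⟩).isLt)]
    set j : Fin n := ⟨m, h⟩
    have hidx : (⟨((δ j).castSucc : ℕ), by simpa using (δ j).isLt⟩ : Fin n) = δ j := by
      apply Fin.ext; simp
    rw [hidx]
    congr 1
    -- need: σ ((σ⁻¹ i).succAbove j) = i.succAbove (δ j)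
    set j' : Fin (n + 1) := (σ⁻¹ i).succAbove j with hj'def
    have h1 : j' ≠ σ⁻¹ i := Fin.succAbove_ne (σ⁻¹ i) j
    have hne : (σ j' : ℕ) ≠ (i : ℕ) := fun hc => h1 (by
      have : σ j' = i := Fin.ext hc
      calc j' = σ⁻¹ (σ j') := by simp
        _ = σ⁻¹ i := by rw [this])
    have hJ : (if (j : ℕ) < ((σ⁻¹ i : Fin (n + 1)) : ℕ) then j.castSucc else j.succ) = j' := by
      apply Fin.ext
      rw [hj'def, val_succAbove']
      split <;> simp
    have hd := hδ j
    simp only [hJ] at hd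
    apply Fin.ext
    rw [val_succAbove']
    split_ifs at hd with h2 <;> split_ifs with h3 <;> omega

  · rw [dif_neg h, dif_neg h, dif_neg h]
    simp
end
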